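/- Let a < b be real numbers. For every continuous linear functional φ on the space L¹([a,b]) of (equivalence classes of) Lebesgue-integrable real-valued functions on [a,b], there exists an essentially bounded measurable function g ∈ L^∞([a,b]) such that φ(f) = ∫_{[a,b]} g·f dλ for every f ∈ L¹([a,b]), and the operator norm of φ equals the essential supremum norm of g: ‖φ‖ = ‖g‖_∞. -/

import Mathlib

open MeasureTheory

open scoped ENNReal NNReal

section General

variable {α : Type*} [MeasurableSpace α] {μ : Measure α} [IsFiniteMeasure μ]

private lemma mem_one (f : Lp ℝ 2 μ) : MemLp (f : α → ℝ) 1 μ :=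
  (Lp.memLp f).mono_exponent (by norm_num)

/-- Inclusion of `L²` into `L¹` for a finite measure. -/
private noncomputable def incl (f : Lp ℝ 2 μ) : Lp ℝ 1 μ := (mem_one f).toLp f

private lemma incl_coeFn (f : Lp ℝ 2 μ) : (incl f : α → ℝ) =ᵐ[μ] f :=
  MemLp.coeFn_toLp _

private lemma incl_add (f g : Lp ℝ 2 μ) : incl (f + g) = incl f + incl g := by
  refine Lp.ext ?_
  filter_upwards [incl_coeFn (f + g), incl_coeFn f, incl_coeFn g,
    Lp.coeFn_add f g, Lp.coeFn_add (incl f) (incl g)] with x h1 h2 h3 h4 h5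
  rw [h1, h4, h5, Pi.add_apply, Pi.add_apply, h2, h3]

private lemma incl_smul (c : ℝ) (f : Lp ℝ 2 μ) : incl (c • f) = c • incl f := by
  refine Lp.ext ?_
  filter_upwards [incl_coeFn (c • f), incl_coeFn f,
    Lp.coeFn_smul c f, Lp.coeFn_smul c (incl f)] with x h1 h2 h3 h4
  rw [h1, h3, h4, Pi.smul_apply, Pi.smul_apply, h2]

private lemma norm_incl_le (f : Lp ℝ 2 μ) :
    ‖incl f‖ ≤ (μ Set.univ ^ (2 : ℝ)⁻¹).toReal * ‖f‖ := by
  have h1 : eLpNorm ((incl f : α → ℝ)) 1 μ = eLpNorm (f : α → ℝ) 1 μ :=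
    eLpNorm_congr_ae (incl_coeFn f)
  have h2 : eLpNorm (f : α → ℝ) 1 μ ≤ eLpNorm (f : α → ℝ) 2 μ * μ Set.univ ^ (2 : ℝ)⁻¹ := by
    have := eLpNorm_le_eLpNorm_mul_rpow_measure_univ (μ := μ) (f := (f : α → ℝ))
      (p := 1) (q := 2) (by norm_num) (Lp.aestronglyMeasurable f)
    convert this using 3
    norm_num
  rw [Lp.norm_def, Lp.norm_def, h1]
  have hfin : eLpNorm (f : α → ℝ) 2 μ * μ Set.univ ^ (2 : ℝ)⁻¹ ≠ ⊤ :=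
    ENNReal.mul_ne_top (Lp.eLpNorm_ne_top f)
      (by
        have : μ Set.univ < ⊤ := measure_lt_top μ _
        exact (ENNReal.rpow_lt_top_of_nonneg (by norm_num) this.ne).ne)
  calc (eLpNorm (f : α → ℝ) 1 μ).toReal
      ≤ (eLpNorm (f : α → ℝ) 2 μ * μ Set.univ ^ (2 : ℝ)⁻¹).toReal :=
        ENNReal.toReal_mono hfin h2
    _ = (μ Set.univ ^ (2 : ℝ)⁻¹).toReal * (eLpNorm (f : α → ℝ) 2 μ).toReal := by
        rw [ENNReal.toReal_mul, mul_comm]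

theorem dual_L1_general (φ : Lp ℝ 1 μ →L[ℝ] ℝ) :
    ∃ g : Lp ℝ ⊤ μ,
      (∀ f : Lp ℝ 1 μ, φ f = ∫ x, g x * f x ∂μ) ∧ ‖φ‖ = ‖g‖ := by
  classical
  set c : ℝ := ‖φ‖ with hc
  have hc0 : 0 ≤ c := norm_nonneg φ
  -- the functional on L²
  let T : Lp ℝ 2 μ →L[ℝ] ℝ :=
    LinearMap.mkContinuous
      { toFun := fun f => φ (incl f)
        map_add' := fun f g => by
          show φ (incl (f + g)) = φ (incl f) + φ (incl g)
          rw [incl_add, map_add]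
        map_smul' := fun r f => by
          show φ (incl (r • f)) = r • φ (incl f)
          rw [incl_smul, _root_.map_smul] }
      (c * (μ Set.univ ^ (2 : ℝ)⁻¹).toReal)
      (by
        intro f
        simp only [LinearMap.coe_mk, AddHom.coe_mk]
        calc ‖φ (incl f)‖ ≤ c * ‖incl f‖ := φ.le_opNorm _
          _ ≤ c * ((μ Set.univ ^ (2 : ℝ)⁻¹).toReal * ‖f‖) := by
              exact mul_le_mul_of_nonneg_left (norm_incl_le f) hc0
          _ = c * (μ Set.univ ^ (2 : ℝ)⁻¹).toReal * ‖f‖ := by ring)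
  -- Riesz representation on L²
  obtain ⟨g2, hg2⟩ : ∃ g2 : Lp ℝ 2 μ, ∀ f : Lp ℝ 2 μ, φ (incl f) = ∫ x, g2 x * f x ∂μ := by
    refine ⟨(InnerProductSpace.toDual ℝ (Lp ℝ 2 μ)).symm T, fun f => ?_⟩
    have h1 : (T : Lp ℝ 2 μ → ℝ) f = φ (incl f) := rfl
    have h2 : inner ℝ ((InnerProductSpace.toDual ℝ (Lp ℝ 2 μ)).symm T) f = T f := by
      rw [← InnerProductSpace.toDual_apply_apply, LinearIsometryEquiv.apply_symm_apply]
    rw [← h1, ← h2, L2.inner_def]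
    exact integral_congr_ae (Filter.Eventually.of_forall fun x => by
      simp only [RCLike.inner_apply, conj_trivial]; ring)
  have hg2meas : StronglyMeasurable (g2 : α → ℝ) := Lp.stronglyMeasurable g2
  have hg2int : Integrable (g2 : α → ℝ) μ := memLp_one_iff_integrable.mp (mem_one g2)
  -- a.e. bound |g2| ≤ ‖φ‖
  have key : ∀ ε : ℝ, 0 < ε → μ {x | c + ε ≤ |(g2 : α → ℝ) x|} = 0 := by
    intro ε hε
    set S : Set α := {x | c + ε ≤ |(g2 : α → ℝ) x|} with hS
    have hSmeas : MeasurableSet S :=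
      measurableSet_le measurable_const hg2meas.measurable.abs
    set f0 : α → ℝ := S.indicator (fun x => if 0 ≤ (g2 : α → ℝ) x then 1 else -1) with hf0
    have hf0meas : StronglyMeasurable f0 :=
      ((Measurable.ite (measurableSet_le measurable_const hg2meas.measurable)
        measurable_const measurable_const).indicator hSmeas).stronglyMeasurable
    have hf0bd : ∀ x, ‖f0 x‖ ≤ 1 := by
      intro x
      rw [hf0]
      by_cases hx : x ∈ S
      · rw [Set.indicator_of_mem hx]; split <;> simp
      · rw [Set.indicator_of_notMem hx]; simp
    have hf0top : MemLp f0 ⊤ μ :=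
      memLp_top_of_bound hf0meas.aestronglyMeasurable 1 (Filter.Eventually.of_forall hf0bd)
    have hf02 : MemLp f0 2 μ := hf0top.mono_exponent le_top
    set F : Lp ℝ 2 μ := hf02.toLp f0 with hF
    have hFcoe : (F : α → ℝ) =ᵐ[μ] f0 := MemLp.coeFn_toLp _
    -- compute φ (incl F)
    have hmul : ∀ x, (g2 : α → ℝ) x * f0 x = S.indicator (fun y => |(g2 : α → ℝ) y|) x := by
      intro x
      by_cases hx : x ∈ S
      · rw [hf0, Set.indicator_of_mem hx, Set.indicator_of_mem hx]
        split
        · next h => rw [abs_of_nonneg h]; ring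
        · next h => rw [abs_of_neg (lt_of_not_ge h)]; ring
      · rw [hf0, Set.indicator_of_notMem hx, Set.indicator_of_notMem hx, mul_zero]
    have hval : φ (incl F) = ∫ x in S, |(g2 : α → ℝ) x| ∂μ := by
      rw [hg2 F]
      rw [integral_congr_ae (g := fun x => (g2 : α → ℝ) x * f0 x)
        (by filter_upwards [hFcoe] with x hx; rw [hx])]
      rw [integral_congr_ae (Filter.Eventually.of_forall hmul), integral_indicator hSmeas]
    -- lower bound
    have hlow : (c + ε) * (μ S).toReal ≤ φ (incl F) := by
      rw [hval]
      exact setIntegral_ge_of_const_le_real hSmeas (measure_ne_top μ S)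
        (fun x hx => hx) hg2int.abs.integrableOn
    -- upper bound
    have hnormF : ‖incl F‖ ≤ (μ S).toReal := by
      rw [Lp.norm_def]
      have h1 : eLpNorm ((incl F : α → ℝ)) 1 μ = eLpNorm f0 1 μ :=
        eLpNorm_congr_ae ((incl_coeFn F).trans hFcoe)
      rw [h1]
      have h2 : eLpNorm f0 1 μ ≤ μ S := by
        have : ∀ x, (‖f0 x‖₊ : ℝ≥0∞) ≤ S.indicator (fun _ => (1 : ℝ≥0∞)) x := by
          intro x
          by_cases hx : x ∈ S
          · rw [Set.indicator_of_mem hx]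
            have := hf0bd x
            simpa [← NNReal.coe_le_coe, ENNReal.coe_le_one_iff] using this
          · rw [hf0, Set.indicator_of_notMem hx, Set.indicator_of_notMem hx]; simp
        calc eLpNorm f0 1 μ = ∫⁻ x, ‖f0 x‖₊ ∂μ := by
              exact eLpNorm_one_eq_lintegral_enorm
          _ ≤ ∫⁻ x, S.indicator (fun _ => (1 : ℝ≥0∞)) x ∂μ := by
              exact lintegral_mono fun x => this x
          _ = μ S := by rw [lintegral_indicator hSmeas]; simp
      exact ENNReal.toReal_mono (measure_ne_top μ S) h2
    have hup : φ (incl F) ≤ c * (μ S).toReal := by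
      calc φ (incl F) ≤ |φ (incl F)| := le_abs_self _
        _ ≤ c * ‖incl F‖ := φ.le_opNorm _
        _ ≤ c * (μ S).toReal := mul_le_mul_of_nonneg_left hnormF hc0
    have hμS : (μ S).toReal = 0 := by
      have h0 : (0:ℝ) ≤ (μ S).toReal := ENNReal.toReal_nonneg
      nlinarith
    exact (ENNReal.toReal_eq_zero_iff _).mp hμS |>.resolve_right (measure_ne_top μ S)
  have hae : ∀ᵐ x ∂μ, |(g2 : α → ℝ) x| ≤ c := by
    have hsub : {x | ¬ |(g2 : α → ℝ) x| ≤ c} ⊆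
        ⋃ n : ℕ, {x | c + 1 / (n + 1) ≤ |(g2 : α → ℝ) x|} := by
      intro x hx
      simp only [Set.mem_setOf_eq, not_le] at hx
      obtain ⟨n, hn⟩ := exists_nat_one_div_lt (sub_pos.mpr hx)
      refine Set.mem_iUnion.mpr ⟨n, ?_⟩
      simp only [Set.mem_setOf_eq]
      linarith
    rw [ae_iff]
    exact measure_mono_null hsub (measure_iUnion_null fun n => key _ (by positivity))
  -- g in L∞
  have hgtop : MemLp (g2 : α → ℝ) ⊤ μ :=
    memLp_top_of_bound (Lp.aestronglyMeasurable g2) c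
      (by filter_upwards [hae] with x hx; simpa using hx)
  set gL : Lp ℝ ⊤ μ := hgtop.toLp _ with hgL
  have hgco : (gL : α → ℝ) =ᵐ[μ] (g2 : α → ℝ) := MemLp.coeFn_toLp _
  -- integrability of products
  have hmulint : ∀ f : α → ℝ, Integrable f μ →
      Integrable (fun x => (g2 : α → ℝ) x * f x) μ := by
    intro f hf
    have h := memLp_one_iff_integrable.mpr (hf.smul_of_top_right (φ := (g2 : α → ℝ)) hgtop)
    have : ((g2 : α → ℝ) • f) = fun x => (g2 : α → ℝ) x * f x := rfl
    rw [this] at h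
    exact memLp_one_iff_integrable.mp h
  -- the basic Hölder-type bound
  have hbound : ∀ C : ℝ, (∀ᵐ x ∂μ, |(g2 : α → ℝ) x| ≤ C) → ∀ f : α → ℝ, Integrable f μ →
      |∫ x, (g2 : α → ℝ) x * f x ∂μ| ≤ C * ∫ x, |f x| ∂μ := by
    intro C hC f hf
    calc |∫ x, (g2 : α → ℝ) x * f x ∂μ| ≤ ∫ x, |(g2 : α → ℝ) x| * |f x| ∂μ := by
          simpa [Real.norm_eq_abs, abs_mul] using
            norm_integral_le_integral_norm (μ := μ) (fun x => (g2 : α → ℝ) x * f x)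
      _ ≤ ∫ x, C * |f x| ∂μ := by
          refine integral_mono_ae ?_ (hf.abs.const_mul C) ?_
          · simpa [abs_mul] using (hmulint f hf).abs
          · filter_upwards [hC] with x hx
            exact mul_le_mul_of_nonneg_right hx (abs_nonneg _)
      _ = C * ∫ x, |f x| ∂μ := integral_const_mul C _
  -- representation for all of L¹ by density
  have rep2 : ∀ f : Lp ℝ 1 μ, φ f = ∫ x, (g2 : α → ℝ) x * f x ∂μ := by
    refine Lp.induction (p := 1) (by norm_num : (1 : ℝ≥0∞) ≠ ⊤) _ ?_ ?_ ?_
    · intro c0 s hs hμs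
      rw [Lp.simpleFunc.coe_indicatorConst]
      have h2 : incl (indicatorConstLp 2 hs hμs.ne c0) = indicatorConstLp 1 hs hμs.ne c0 :=
        Lp.ext ((incl_coeFn _).trans (indicatorConstLp_coeFn.trans indicatorConstLp_coeFn.symm))
      rw [← h2, hg2]
      refine integral_congr_ae ?_
      filter_upwards [incl_coeFn (indicatorConstLp 2 hs hμs.ne c0),
        indicatorConstLp_coeFn (p := 2) (hs := hs) (hμs := hμs.ne) (c := c0),
        indicatorConstLp_coeFn (p := 1) (hs := hs) (hμs := hμs.ne) (c := c0)] with x h0 h1 h2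
      rw [h0]
    · intro f g hf hg hdisj hPf hPg
      have hfint : Integrable f μ := memLp_one_iff_integrable.mp hf
      have hgint : Integrable g μ := memLp_one_iff_integrable.mp hg
      have e1 : ∫ x, (g2 : α → ℝ) x * (hf.toLp f : α → ℝ) x ∂μ
          = ∫ x, (g2 : α → ℝ) x * f x ∂μ := by
        refine integral_congr_ae ?_
        filter_upwards [hf.coeFn_toLp] with x hx; rw [hx]
      have e2 : ∫ x, (g2 : α → ℝ) x * (hg.toLp g : α → ℝ) x ∂μ
          = ∫ x, (g2 : α → ℝ) x * g x ∂μ := by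
        refine integral_congr_ae ?_
        filter_upwards [hg.coeFn_toLp] with x hx; rw [hx]
      have e3 : ∫ x, (g2 : α → ℝ) x * ((hf.toLp f + hg.toLp g : Lp ℝ 1 μ) : α → ℝ) x ∂μ
          = ∫ x, ((g2 : α → ℝ) x * f x + (g2 : α → ℝ) x * g x) ∂μ := by
        refine integral_congr_ae ?_
        filter_upwards [Lp.coeFn_add (hf.toLp f) (hg.toLp g), hf.coeFn_toLp,
          hg.coeFn_toLp] with x h1 h2 h3
        rw [h1, Pi.add_apply, h2, h3, mul_add]
      rw [map_add, hPf, hPg, e1, e2, e3,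
        integral_add (hmulint f hfint) (hmulint g hgint)]
    · have hlip : LipschitzWith (Real.toNNReal c)
          (fun f : Lp ℝ 1 μ => ∫ x, (g2 : α → ℝ) x * f x ∂μ) := by
        refine LipschitzWith.of_dist_le_mul fun f f' => ?_
        have hfint : Integrable (f : α → ℝ) μ := L1.integrable_coeFn f
        have hf'int : Integrable (f' : α → ℝ) μ := L1.integrable_coeFn f'
        have hsub : ∫ x, (g2 : α → ℝ) x * (f : α → ℝ) x ∂μ
            - ∫ x, (g2 : α → ℝ) x * (f' : α → ℝ) x ∂μ
            = ∫ x, (g2 : α → ℝ) x * ((f - f' : Lp ℝ 1 μ) : α → ℝ) x ∂μ := by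
          rw [← integral_sub (hmulint _ hfint) (hmulint _ hf'int)]
          refine integral_congr_ae ?_
          filter_upwards [Lp.coeFn_sub f f'] with x hx
          rw [hx, Pi.sub_apply, mul_sub]
        rw [Real.dist_eq, hsub]
        have := hbound c hae _ (L1.integrable_coeFn (f - f'))
        refine this.trans ?_
        rw [dist_eq_norm, L1.norm_eq_integral_norm]
        simp only [Real.norm_eq_abs]
        exact le_of_eq (by rw [Real.coe_toNNReal c hc0])
      exact isClosed_eq φ.continuous hlip.continuous
  -- transfer to gL
  have repL : ∀ f : Lp ℝ 1 μ, φ f = ∫ x, (gL : α → ℝ) x * (f : α → ℝ) x ∂μ := by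
    intro f
    rw [rep2 f]
    refine integral_congr_ae ?_
    filter_upwards [hgco] with x hx; rw [hx]
  refine ⟨gL, repL, ?_⟩
  -- norm inequality 1 : ‖gL‖ ≤ ‖φ‖
  have hnorm1 : ‖gL‖ ≤ c := by
    rw [Lp.norm_def, eLpNorm_exponent_top]
    have hle : eLpNormEssSup (gL : α → ℝ) μ ≤ ENNReal.ofReal c := by
      refine eLpNormEssSup_le_of_ae_bound (C := c) ?_
      filter_upwards [hgco, hae] with x h1 h2
      rw [Real.norm_eq_abs, h1]; exact h2
    calc (eLpNormEssSup (gL : α → ℝ) μ).toReal ≤ (ENNReal.ofReal c).toReal :=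
          ENNReal.toReal_mono ENNReal.ofReal_ne_top hle
      _ = c := ENNReal.toReal_ofReal hc0
  -- a.e. bound by ‖gL‖
  have haegL : ∀ᵐ x ∂μ, |(g2 : α → ℝ) x| ≤ ‖gL‖ := by
    have hfin : eLpNormEssSup (gL : α → ℝ) μ ≠ ⊤ := by
      rw [← eLpNorm_exponent_top]; exact Lp.eLpNorm_ne_top gL
    filter_upwards [ae_le_eLpNormEssSup (f := (gL : α → ℝ)), hgco] with x hx hx2
    have h3 : ((‖(gL : α → ℝ) x‖₊ : ℝ≥0∞)).toReal ≤ (eLpNormEssSup (gL : α → ℝ) μ).toReal :=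
      ENNReal.toReal_mono hfin hx
    rw [Lp.norm_def, eLpNorm_exponent_top]
    rw [← hx2, ← Real.norm_eq_abs]
    simpa using h3
  -- norm inequality 2 : ‖φ‖ ≤ ‖gL‖
  have hnorm2 : c ≤ ‖gL‖ := by
    refine φ.opNorm_le_bound (norm_nonneg gL) fun f => ?_
    rw [rep2 f, Real.norm_eq_abs]
    refine (hbound ‖gL‖ haegL _ (L1.integrable_coeFn f)).trans ?_
    rw [L1.norm_eq_integral_norm]
    simp only [Real.norm_eq_abs]
    exact le_rfl
  exact le_antisymm hnorm2 hnorm1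

end General

/-- Steinhaus (1918): the dual of `L¹([a,b])` is `L^∞([a,b])`: every
continuous linear functional `φ` on `L¹([a,b])` is `f ↦ ∫ g f dλ` for some
essentially bounded `g ∈ L^∞([a,b])` with `‖φ‖ = ‖g‖_∞`. -/
theorem dual_L1_Icc
    (a b : ℝ) (hab : a < b)
    (φ : Lp ℝ 1 (volume.restrict (Set.Icc a b)) →L[ℝ] ℝ) :
    ∃ g : Lp ℝ ⊤ (volume.restrict (Set.Icc a b)),
      (∀ f : Lp ℝ 1 (volume.restrict (Set.Icc a b)),
          φ f = ∫ x, g x * f x ∂(volume.restrict (Set.Icc a b))) ∧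
      ‖φ‖ = ‖g‖ := by
  haveI : IsFiniteMeasure (volume.restrict (Set.Icc a b)) :=
    ⟨by rw [Measure.restrict_apply_univ]; exact measure_Icc_lt_top⟩
  exact dual_L1_general φ
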